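/- arXiv:1409.4333 — 11 statements merged into one kernel-verified Lean document; each statement's English description precedes it below -/
import Mathlib

section
/- Let F be a field, θ_0, θ_d, θ*_0, θ*_d, φ_1, φ_d, ϕ_1, ϕ_d ∈ F with θ_0 ≠ θ_d, θ*_0 ≠ θ*_d, all of φ_1, φ_d, ϕ_1, ϕ_d nonzero, and φ_1 ≠ ϕ_1, φ_d ≠ ϕ_d, φ_1 ≠ ϕ_d, φ_d ≠ ϕ_1. Define a_0, a_d, a*_0, a*_d by a_0 = (θ_0 ϕ_1 − θ_d φ_1)/(ϕ_1 − φ_1), a_d = (θ_d ϕ_d − θ_0 φ_d)/(ϕ_d − φ_d), a*_0 = (θ*_0 ϕ_d − θ*_d φ_1)/(ϕ_d − φ_1), a*_d = (θ*_d ϕ_1 − θ*_0 φ_d)/(ϕ_1 − φ_d). Then (a_0 − θ_0)(a_d − θ_d)(a*_0 − θ*_d)(a*_d − θ*_0) = (a_0 − θ_d)(a_d − θ_0)(a*_0 − θ*_0)(a*_d − θ*_d), i.e. the end-entries satisfy the cross-ratio relation ((a_0−θ_0)(a_d−θ_d))/((a_0−θ_d)(a_d−θ_0)) = ((a*_0−θ*_0)(a*_d−θ*_d))/((a*_0−θ*_d)(a*_d−θ*_0)),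 and all denominators are nonzero. -/
/-! Writing `a = (θ ψ - θ' φ) / (ψ - φ)`, one has `a - θ = (θ - θ') φ / (ψ - φ)` and
`a - θ' = (θ - θ') ψ / (ψ - φ)`. Substituting these for the four end entries, both sides of the
identity become the same product: the eigenvalue differences and denominators agree, and each side
carries all four split parameters `φ₁ φ_d ϕ₁ ϕ_d` once. The cross-ratio form follows by dividing,
the denominators being products of nonzero factors `(θ - θ') ψ / (ψ - φ)`. -/

section WeightedMean

variable {F : Type*} [Field F] {a θ θ' φ ψ : F}

lemma sub_left_of_eq_div (hφψ : φ ≠ ψ) (ha : a = (θ * ψ - θ' * φ) / (ψ - φ)) :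
    a - θ = (θ - θ') * φ / (ψ - φ) := by
  have : ψ - φ ≠ 0 := sub_ne_zero.mpr hφψ.symm
  rw [ha]
  field_simp
  ring

lemma sub_right_of_eq_div (hφψ : φ ≠ ψ) (ha : a = (θ * ψ - θ' * φ) / (ψ - φ)) :
    a - θ' = (θ - θ') * ψ / (ψ - φ) := by
  have : ψ - φ ≠ 0 := sub_ne_zero.mpr hφψ.symm
  rw [ha]
  field_simp
  ring

lemma sub_right_ne_zero_of_eq_div (hθ : θ ≠ θ') (hψ : ψ ≠ 0) (hφψ : φ ≠ ψ)
    (ha : a = (θ * ψ - θ' * φ) / (ψ - φ)) : a - θ' ≠ 0 := by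
  rw [sub_right_of_eq_div hφψ ha]
  exact div_ne_zero (mul_ne_zero (sub_ne_zero.mpr hθ) hψ) (sub_ne_zero.mpr hφψ.symm)

end WeightedMean

theorem stmt3_general (F : Type*) [Field F]
    (θ0 θd θs0 θsd φ1 φd ψ1 ψd a0 ad as0 asd : F)
    (h1 : θ0 ≠ θd) (h2 : θs0 ≠ θsd)
    (n3 : ψ1 ≠ 0) (n4 : ψd ≠ 0)
    (h3 : φ1 ≠ ψ1) (h4 : φd ≠ ψd) (h5 : φ1 ≠ ψd) (h6 : φd ≠ ψ1)
    (ha0 : a0 = (θ0 * ψ1 - θd * φ1) / (ψ1 - φ1))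
    (had : ad = (θd * ψd - θ0 * φd) / (ψd - φd))
    (has0 : as0 = (θs0 * ψd - θsd * φ1) / (ψd - φ1))
    (hasd : asd = (θsd * ψ1 - θs0 * φd) / (ψ1 - φd)) :
    (a0 - θ0) * (ad - θd) * (as0 - θsd) * (asd - θs0)
      = (a0 - θd) * (ad - θ0) * (as0 - θs0) * (asd - θsd) ∧
    ((a0 - θ0) * (ad - θd)) / ((a0 - θd) * (ad - θ0))
      = ((as0 - θs0) * (asd - θsd)) / ((as0 - θsd) * (asd - θs0)) ∧
    (a0 - θd) * (ad - θ0) ≠ 0 ∧ (as0 - θsd) * (asd - θs0) ≠ 0 := by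
  have key : (a0 - θ0) * (ad - θd) * (as0 - θsd) * (asd - θs0)
      = (a0 - θd) * (ad - θ0) * (as0 - θs0) * (asd - θsd) := by
    rw [sub_left_of_eq_div h3 ha0, sub_right_of_eq_div h3 ha0,
      sub_left_of_eq_div h4 had, sub_right_of_eq_div h4 had,
      sub_left_of_eq_div h5 has0, sub_right_of_eq_div h5 has0,
      sub_left_of_eq_div h6 hasd, sub_right_of_eq_div h6 hasd]
    ring
  have hden : (a0 - θd) * (ad - θ0) ≠ 0 :=
    mul_ne_zero (sub_right_ne_zero_of_eq_div h1 n3 h3 ha0)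
      (sub_right_ne_zero_of_eq_div h1.symm n4 h4 had)
  have hden' : (as0 - θsd) * (asd - θs0) ≠ 0 :=
    mul_ne_zero (sub_right_ne_zero_of_eq_div h2 n4 h5 has0)
      (sub_right_ne_zero_of_eq_div h2.symm n3 h6 hasd)
  refine ⟨key, (div_eq_div_iff hden hden').mpr ?_, hden, hden'⟩
  linear_combination key

theorem stmt3 (F : Type*) [Field F]
    (θ0 θd θs0 θsd φ1 φd ψ1 ψd a0 ad as0 asd : F)
    (h1 : θ0 ≠ θd) (h2 : θs0 ≠ θsd)
    (n1 : φ1 ≠ 0) (n2 : φd ≠ 0) (n3 : ψ1 ≠ 0) (n4 : ψd ≠ 0)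
    (h3 : φ1 ≠ ψ1) (h4 : φd ≠ ψd) (h5 : φ1 ≠ ψd) (h6 : φd ≠ ψ1)
    (ha0 : a0 = (θ0 * ψ1 - θd * φ1) / (ψ1 - φ1))
    (had : ad = (θd * ψd - θ0 * φd) / (ψd - φd))
    (has0 : as0 = (θs0 * ψd - θsd * φ1) / (ψd - φ1))
    (hasd : asd = (θsd * ψ1 - θs0 * φd) / (ψ1 - φd)) :
    (a0 - θ0) * (ad - θd) * (as0 - θsd) * (asd - θs0)
      = (a0 - θd) * (ad - θ0) * (as0 - θs0) * (asd - θsd) ∧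
    ((a0 - θ0) * (ad - θd)) / ((a0 - θd) * (ad - θ0))
      = ((as0 - θs0) * (asd - θsd)) / ((as0 - θsd) * (asd - θs0)) ∧
    (a0 - θd) * (ad - θ0) ≠ 0 ∧ (as0 - θsd) * (asd - θs0) ≠ 0 :=
  stmt3_general F θ0 θd θs0 θsd φ1 φd ψ1 ψd a0 ad as0 asd h1 h2 n3 n4 h3 h4 h5 h6 ha0 had has0 hasd
end

section
/- Under the hypotheses of the previous cross-ratio relation (same definitions of a_0, a_d, a*_0, a*_d from θ's and φ's, ϕ's, with the stated nonvanishing conditions), each side of the cross-ratio identity equals φ_1 φ_d / (ϕ_1 ϕ_d); that is, ((a_0 − θ_0)(a_d − θ_d))/((a_0 − θ_d)(a_d − θ_0)) = φ_1 φ_d/(ϕ_1 ϕ_d). -/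
/-!
`a₀` divides the segment from `θ₀` to `θ_d` in the ratio `(a₀ - θ₀) : (a₀ - θ_d) = φ₁ : ψ₁`, and
`a_d` divides it in the ratio `(a_d - θ_d) : (a_d - θ₀) = φ_d : ψ_d`; the cross ratio is the
product of these two ratios.
-/

section DivisionRatio

variable {F : Type*} [Field F] {a x y φ ψ : F}

theorem sub_left_eq_of_eq_div (hφψ : φ ≠ ψ) (ha : a = (x * ψ - y * φ) / (ψ - φ)) :
    a - x = φ * (x - y) / (ψ - φ) := by
  have hψφ : ψ - φ ≠ 0 := sub_ne_zero.mpr hφψ.symm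
  rw [ha]
  field_simp
  ring

theorem sub_right_eq_of_eq_div (hφψ : φ ≠ ψ) (ha : a = (x * ψ - y * φ) / (ψ - φ)) :
    a - y = ψ * (x - y) / (ψ - φ) := by
  have hψφ : ψ - φ ≠ 0 := sub_ne_zero.mpr hφψ.symm
  rw [ha]
  field_simp
  ring

theorem sub_div_sub_eq_of_eq_div (hxy : x ≠ y) (hφψ : φ ≠ ψ)
    (ha : a = (x * ψ - y * φ) / (ψ - φ)) : (a - x) / (a - y) = φ / ψ := by
  have hc : (x - y) / (ψ - φ) ≠ 0 :=
    div_ne_zero (sub_ne_zero.mpr hxy) (sub_ne_zero.mpr hφψ.symm)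
  rw [sub_left_eq_of_eq_div hφψ ha, sub_right_eq_of_eq_div hφψ ha, mul_div_assoc φ,
    mul_div_assoc ψ, mul_div_mul_right φ ψ hc]

end DivisionRatio

theorem stmt4_general (F : Type*) [Field F]
    (θ0 θd φ1 φd ψ1 ψd a0 ad : F)
    (h1 : θ0 ≠ θd)
    (h3 : φ1 ≠ ψ1) (h4 : φd ≠ ψd)
    (ha0 : a0 = (θ0 * ψ1 - θd * φ1) / (ψ1 - φ1))
    (had : ad = (θd * ψd - θ0 * φd) / (ψd - φd)) :
    ((a0 - θ0) * (ad - θd)) / ((a0 - θd) * (ad - θ0)) = φ1 * φd / (ψ1 * ψd) := by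
  rw [mul_div_mul_comm, sub_div_sub_eq_of_eq_div h1 h3 ha0,
    sub_div_sub_eq_of_eq_div h1.symm h4 had, div_mul_div_comm]

theorem stmt4 (F : Type*) [Field F]
    (θ0 θd θs0 θsd φ1 φd ψ1 ψd a0 ad : F)
    (h1 : θ0 ≠ θd) (h2 : θs0 ≠ θsd)
    (n1 : φ1 ≠ 0) (n2 : φd ≠ 0) (n3 : ψ1 ≠ 0) (n4 : ψd ≠ 0)
    (h3 : φ1 ≠ ψ1) (h4 : φd ≠ ψd)
    (ha0 : a0 = (θ0 * ψ1 - θd * φ1) / (ψ1 - φ1))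
    (had : ad = (θd * ψd - θ0 * φd) / (ψd - φd)) :
    ((a0 - θ0) * (ad - θd)) / ((a0 - θd) * (ad - θ0)) = φ1 * φd / (ψ1 * ψd) :=
  stmt4_general F θ0 θd φ1 φd ψ1 ψd a0 ad h1 h3 h4 ha0 had
end

section
/- Let F be a field and let θ_0, θ_d, θ*_0, θ*_d, φ_1, φ_d, ϕ_1, ϕ_d ∈ F with θ_0 ≠ θ_d, θ*_0 ≠ θ*_d, and φ_1 ≠ ϕ_1, ϕ_d ≠ φ_1, ϕ_d ≠ φ_d, ϕ_1 ≠ φ_d. Define the end-entries a_0 = (θ_0 ϕ_1 − θ_d φ_1)/(ϕ_1 − φ_1), a_d = (θ_d ϕ_d − θ_0 φ_d)/(ϕ_d − φ_d), a*_0 = (θ*_0 ϕ_d − θ*_d φ_1)/(ϕ_d − φ_1), and set Δ = (a_0 − θ_0)(a*_0 − θ*_d) − (a_d − θ_0)(a*_0 − θ*_0). Then Δ = φ_1 ϕ_d (θ_0 − θ_d)(θ*_0 − θ*_d)(ϕ_1 + ϕ_d − φ_1 − φ_d) / ((ϕ_1 − φ_1)(ϕ_d − φ_1)(ϕ_d −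 φ_d)). -/
theorem stmt5 (F : Type*) [Field F]
    (θ0 θd θs0 θsd φ1 φd ψ1 ψd a0 ad as0 Δ : F)
    (h1 : θ0 ≠ θd) (h2 : θs0 ≠ θsd)
    (h3 : φ1 ≠ ψ1) (h4 : ψd ≠ φ1) (h5 : ψd ≠ φd) (h6 : ψ1 ≠ φd)
    (ha0 : a0 = (θ0 * ψ1 - θd * φ1) / (ψ1 - φ1))
    (had : ad = (θd * ψd - θ0 * φd) / (ψd - φd))
    (has0 : as0 = (θs0 * ψd - θsd * φ1) / (ψd - φ1))
    (hΔ : Δ = (a0 - θ0) * (as0 - θsd) - (ad - θ0) * (as0 - θs0)) :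
    Δ = φ1 * ψd * (θ0 - θd) * (θs0 - θsd) * (ψ1 + ψd - φ1 - φd)
          / ((ψ1 - φ1) * (ψd - φ1) * (ψd - φd)) := by
  have e3 : ψ1 - φ1 ≠ 0 := sub_ne_zero.mpr (Ne.symm h3)
  have e4 : ψd - φ1 ≠ 0 := sub_ne_zero.mpr h4
  have e5 : ψd - φd ≠ 0 := sub_ne_zero.mpr h5
  subst ha0 had has0 hΔ
  field_simp
  ring
end

section
/- With the same setup as the previous statement (and additionally φ_1, ϕ_d nonzero), Δ = 0 if and only if φ_1 + φ_d = ϕ_1 + ϕ_d. -/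
theorem stmt6 (F : Type*) [Field F]
    (θ0 θd θs0 θsd φ1 φd ψ1 ψd a0 ad as0 Δ : F)
    (h1 : θ0 ≠ θd) (h2 : θs0 ≠ θsd)
    (n1 : φ1 ≠ 0) (n2 : φd ≠ 0) (n3 : ψ1 ≠ 0) (n4 : ψd ≠ 0)
    (h3 : φ1 ≠ ψ1) (h4 : ψd ≠ φ1) (h5 : ψd ≠ φd) (h6 : ψ1 ≠ φd)
    (ha0 : a0 = (θ0 * ψ1 - θd * φ1) / (ψ1 - φ1))
    (had : ad = (θd * ψd - θ0 * φd) / (ψd - φd))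
    (has0 : as0 = (θs0 * ψd - θsd * φ1) / (ψd - φ1))
    (hΔ : Δ = (a0 - θ0) * (as0 - θsd) - (ad - θ0) * (as0 - θs0)) :
    Δ = 0 ↔ φ1 + φd = ψ1 + ψd := by
  have d1 : ψ1 - φ1 ≠ 0 := sub_ne_zero.mpr (Ne.symm h3)
  have d2 : ψd - φd ≠ 0 := sub_ne_zero.mpr h5
  have d3 : ψd - φ1 ≠ 0 := sub_ne_zero.mpr h4
  have t1 : θ0 - θd ≠ 0 := sub_ne_zero.mpr h1
  have t2 : θs0 - θsd ≠ 0 := sub_ne_zero.mpr h2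
  rw [ha0, had, has0] at hΔ
  have key : Δ * ((ψ1 - φ1) * (ψd - φd) * (ψd - φ1)) =
      φ1 * ψd * (θ0 - θd) * (θs0 - θsd) * (ψ1 + ψd - (φ1 + φd)) := by
    rw [hΔ]; field_simp; ring
  have D : (ψ1 - φ1) * (ψd - φd) * (ψd - φ1) ≠ 0 := by
    exact mul_ne_zero (mul_ne_zero d1 d2) d3
  constructor
  · intro h
    rw [h, zero_mul] at key
    have := key.symm
    rcases mul_eq_zero.mp this with h' | h'
    · exact absurd h' (by
        exact mul_ne_zero (mul_ne_zero (mul_ne_zero n1 n4) t1) t2)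
    · linear_combination -h'
  · intro h
    have hz : ψ1 + ψd - (φ1 + φd) = 0 := by rw [h]; ring
    rw [hz, mul_zero] at key
    exact (mul_eq_zero.mp key).resolve_right D
end

section
/- Let F be a field, with θ_0, θ_d, θ*_0, θ*_d, φ_1, φ_d, ϕ_1, ϕ_d ∈ F satisfying θ_0 ≠ θ_d, θ*_0 ≠ θ*_d, φ_1, φ_d, ϕ_1, ϕ_d nonzero, φ_1 ≠ ϕ_1, ϕ_d ≠ φ_1, ϕ_d ≠ φ_d. Define a_0, a_d, a*_0 by the closed formulas a_0 = (θ_0 ϕ_1 − θ_d φ_1)/(ϕ_1 − φ_1), a_d = (θ_d ϕ_d − θ_0 φ_d)/(ϕ_d − φ_d), a*_0 = (θ*_0 ϕ_d − θ*_d φ_1)/(ϕ_d − φ_1). Then Γ_1 := (a_0 − θ_0)(a_d − θ_0)(a*_0 − θ*_0)(θ*_0 − θ*_d) equals −φ_1² ϕ_d (θ_0 − θ_d)²(θ*_0 − θ*_d)² / ((ϕ_1 − φ_1)(ϕ_d − φ_1)(ϕ_d − φ_d)). -/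
theorem stmt7 (F : Type*) [Field F]
    (θ0 θd θs0 θsd φ1 φd ψ1 ψd a0 ad as0 : F)
    (h1 : θ0 ≠ θd) (h2 : θs0 ≠ θsd)
    (n1 : φ1 ≠ 0) (n2 : φd ≠ 0) (n3 : ψ1 ≠ 0) (n4 : ψd ≠ 0)
    (h3 : φ1 ≠ ψ1) (h4 : ψd ≠ φ1) (h5 : ψd ≠ φd)
    (ha0 : a0 = (θ0 * ψ1 - θd * φ1) / (ψ1 - φ1))
    (had : ad = (θd * ψd - θ0 * φd) / (ψd - φd))
    (has0 : as0 = (θs0 * ψd - θsd * φ1) / (ψd - φ1)) :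
    (a0 - θ0) * (ad - θ0) * (as0 - θs0) * (θs0 - θsd)
      = - (φ1 ^ 2 * ψd * (θ0 - θd) ^ 2 * (θs0 - θsd) ^ 2)
          / ((ψ1 - φ1) * (ψd - φ1) * (ψd - φd)) := by
  have d1 : ψ1 - φ1 ≠ 0 := sub_ne_zero.mpr (Ne.symm h3)
  have d2 : ψd - φ1 ≠ 0 := sub_ne_zero.mpr h4
  have d3 : ψd - φd ≠ 0 := sub_ne_zero.mpr h5
  subst ha0 had has0
  field_simp
  ring
end

section
/- Let F be a field, θ_0, θ_d, θ*_0, θ*_d ∈ F with θ_0 ≠ θ_d, θ*_0 ≠ θ*_d, and φ_1, φ_d, ϕ_1, ϕ_d ∈ F nonzero with φ_1 ≠ ϕ_1, ϕ_d ≠ φ_1, ϕ_d ≠ φ_d, ϕ_1 ≠ φ_d. Define Ω = (ϕ_1 + ϕ_d − φ_1 − φ_d)/((θ_0 − θ_d)(θ*_0 − θ*_d)), a_0 = (θ_0 ϕ_1 − θ_d φ_1)/(ϕ_1 − φ_1), a_d = (θ_d ϕ_d − θ_0 φ_d)/(ϕ_d − φ_d), a*_0 = (θ*_0 ϕ_d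 − θ*_d φ_1)/(ϕ_d − φ_1), Δ = (a_0 − θ_0)(a*_0 − θ*_d) − (a_d − θ_0)(a*_0 − θ*_0), and Γ_1 = (a_0 − θ_0)(a_d − θ_0)(a*_0 − θ*_0)(θ*_0 − θ*_d). Then Ω·Γ_1/φ_1 = −Δ; in particular, if Δ ≠ 0 then φ_1 = −Ω·Γ_1/Δ, so φ_1 is determined by Ω and the end-entries. -/
set_option maxHeartbeats 1000000 in
theorem stmt8 (F : Type*) [Field F]
    (θ0 θd θs0 θsd φ1 φd ψ1 ψd a0 ad as0 Ω Δ Γ1 : F)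
    (h1 : θ0 ≠ θd) (h2 : θs0 ≠ θsd)
    (n1 : φ1 ≠ 0) (n2 : φd ≠ 0) (n3 : ψ1 ≠ 0) (n4 : ψd ≠ 0)
    (h3 : φ1 ≠ ψ1) (h4 : ψd ≠ φ1) (h5 : ψd ≠ φd) (h6 : ψ1 ≠ φd)
    (hΩ : Ω = (ψ1 + ψd - φ1 - φd) / ((θ0 - θd) * (θs0 - θsd)))
    (ha0 : a0 = (θ0 * ψ1 - θd * φ1) / (ψ1 - φ1))
    (had : ad = (θd * ψd - θ0 * φd) / (ψd - φd))
    (has0 : as0 = (θs0 * ψd - θsd * φ1) / (ψd - φ1))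
    (hΔ : Δ = (a0 - θ0) * (as0 - θsd) - (ad - θ0) * (as0 - θs0))
    (hΓ : Γ1 = (a0 - θ0) * (ad - θ0) * (as0 - θs0) * (θs0 - θsd)) :
    Ω * Γ1 / φ1 = -Δ ∧ (Δ ≠ 0 → φ1 = -(Ω * Γ1) / Δ) := by
  have e1 : θ0 - θd ≠ 0 := sub_ne_zero.mpr h1
  have e2 : θs0 - θsd ≠ 0 := sub_ne_zero.mpr h2
  have e3 : ψ1 - φ1 ≠ 0 := sub_ne_zero.mpr (Ne.symm h3)
  have e4 : ψd - φd ≠ 0 := sub_ne_zero.mpr h5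
  have e5 : ψd - φ1 ≠ 0 := sub_ne_zero.mpr h4
  have f1 : a0 - θ0 = φ1 * (θ0 - θd) / (ψ1 - φ1) := by
    rw [ha0]; field_simp; ring
  have f2 : ad - θ0 = ψd * (θd - θ0) / (ψd - φd) := by
    rw [had]; field_simp; ring
  have f3 : as0 - θs0 = φ1 * (θs0 - θsd) / (ψd - φ1) := by
    rw [has0]; field_simp; ring
  have f4 : as0 - θsd = ψd * (θs0 - θsd) / (ψd - φ1) := by
    rw [has0]; field_simp; ring
  have hBDG : (ψ1 - φ1) * (ψd - φd) * (ψd - φ1) ≠ 0 :=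
    mul_ne_zero (mul_ne_zero e3 e4) e5
  have gΔ : Δ = φ1 * ψd * (θ0 - θd) * (θs0 - θsd) * (ψ1 + ψd - φ1 - φd) /
      ((ψ1 - φ1) * (ψd - φd) * (ψd - φ1)) := by
    rw [hΔ, f1, f2, f3, f4, div_mul_div_comm, div_mul_div_comm,
      div_sub_div _ _ (mul_ne_zero e3 e5) (mul_ne_zero e4 e5),
      div_eq_div_iff (mul_ne_zero (mul_ne_zero e3 e5) (mul_ne_zero e4 e5)) hBDG]
    ring
  have gΓ : Γ1 = -(φ1 ^ 2 * ψd * (θ0 - θd) ^ 2 * (θs0 - θsd) ^ 2) /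
      ((ψ1 - φ1) * (ψd - φd) * (ψd - φ1)) := by
    rw [hΓ, f1, f2, f3, div_mul_div_comm, div_mul_div_comm, div_mul_eq_mul_div,
      div_eq_div_iff hBDG hBDG]
    ring
  have main : Ω * Γ1 / φ1 = -Δ := by
    rw [hΩ, gΓ, gΔ, div_mul_div_comm, div_div, ← neg_div,
      div_eq_div_iff (mul_ne_zero (mul_ne_zero (mul_ne_zero e1 e2) hBDG) n1) hBDG]
    ring
  refine ⟨main, fun hΔ0 => ?_⟩
  have h : Ω * Γ1 = -Δ * φ1 := by
    rw [div_eq_iff n1] at main; exact main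
  rw [h]
  field_simp
end

section
/- Let F be a field, θ_0, θ_d, θ*_0, θ*_d ∈ F with θ_0 ≠ θ_d, θ*_0 ≠ θ*_d, and φ_1, φ_d, ϕ_1, ϕ_d ∈ F nonzero with φ_1 ≠ ϕ_1, φ_d ≠ ϕ_d, φ_1 ≠ ϕ_d, φ_d ≠ ϕ_1, and suppose φ_1 + φ_d = ϕ_1 + ϕ_d. Define the end-entries a_0 = (θ_0 ϕ_1 − θ_d φ_1)/(ϕ_1 − φ_1), a_d = (θ_d ϕ_d − θ_0 φ_d)/(ϕ_d − φ_d), a*_0 = (θ*_0 ϕ_d − θ*_d φ_1)/(ϕ_d − φ_1), a*_d = (θ*_d ϕ_1 − θ*_0 φ_d)/(ϕ_1 − φ_d). Then (a_d − θ_0)/(a_0 − θ_0) = (a*_0 − θ*_d)/(a*_0 − θ*_0), (a_0 − θ_d)/(a_0 − θ_0) = (a*_d − θ*_0)/(a*_0 − θ*_0), (a_d − θ_d)/(a_0 − θ_0) = (a*_d − θ*_d)/(a*_0 − θ*_0), and (a_0 − a_d)/(a_0 − θ_0) = (θ*_d − θ*_0)/(a*_0 − θ*_0). -/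
theorem stmt9 (F : Type*) [Field F]
    (θ0 θd θs0 θsd φ1 φd ψ1 ψd a0 ad as0 asd : F)
    (h1 : θ0 ≠ θd) (h2 : θs0 ≠ θsd)
    (n1 : φ1 ≠ 0) (n2 : φd ≠ 0) (n3 : ψ1 ≠ 0) (n4 : ψd ≠ 0)
    (h3 : φ1 ≠ ψ1) (h4 : φd ≠ ψd) (h5 : φ1 ≠ ψd) (h6 : φd ≠ ψ1)
    (hsum : φ1 + φd = ψ1 + ψd)
    (ha0 : a0 = (θ0 * ψ1 - θd * φ1) / (ψ1 - φ1))
    (had : ad = (θd * ψd - θ0 * φd) / (ψd - φd))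
    (has0 : as0 = (θs0 * ψd - θsd * φ1) / (ψd - φ1))
    (hasd : asd = (θsd * ψ1 - θs0 * φd) / (ψ1 - φd)) :
    (ad - θ0) / (a0 - θ0) = (as0 - θsd) / (as0 - θs0) ∧
    (a0 - θd) / (a0 - θ0) = (asd - θs0) / (as0 - θs0) ∧
    (ad - θd) / (a0 - θ0) = (asd - θsd) / (as0 - θs0) ∧
    (a0 - ad) / (a0 - θ0) = (θsd - θs0) / (as0 - θs0) := by
  have d1 : ψ1 - φ1 ≠ 0 := sub_ne_zero.mpr (Ne.symm h3)
  have d2 : ψd - φd ≠ 0 := sub_ne_zero.mpr (Ne.symm h4)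
  have d3 : ψd - φ1 ≠ 0 := sub_ne_zero.mpr (Ne.symm h5)
  have d4 : ψ1 - φd ≠ 0 := sub_ne_zero.mpr (Ne.symm h6)
  have t1 : θ0 - θd ≠ 0 := sub_ne_zero.mpr h1
  have t2 : θs0 - θsd ≠ 0 := sub_ne_zero.mpr h2
  have e0 : a0 - θ0 = φ1 * (θ0 - θd) / (ψ1 - φ1) := by
    rw [ha0]; field_simp; ring
  have e1 : ad - θ0 = ψd * (θd - θ0) / (ψd - φd) := by
    rw [had]; field_simp; ring
  have e2 : a0 - θd = ψ1 * (θ0 - θd) / (ψ1 - φ1) := by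
    rw [ha0]; field_simp; ring
  have e3 : ad - θd = φd * (θd - θ0) / (ψd - φd) := by
    rw [had]; field_simp; ring
  have es0 : as0 - θs0 = φ1 * (θs0 - θsd) / (ψd - φ1) := by
    rw [has0]; field_simp; ring
  have es1 : as0 - θsd = ψd * (θs0 - θsd) / (ψd - φ1) := by
    rw [has0]; field_simp; ring
  have es2 : asd - θs0 = ψ1 * (θsd - θs0) / (ψ1 - φd) := by
    rw [hasd]; field_simp; ring
  have es3 : asd - θsd = φd * (θsd - θs0) / (ψ1 - φd) := by
    rw [hasd]; field_simp; ring
  have ead : a0 - ad = (θ0 - θd) * φ1 / (ψ1 - φ1) + ψd * (θ0 - θd) / (ψd - φd) := by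
    have : a0 - ad = (a0 - θ0) - (ad - θ0) := by ring
    rw [this, e0, e1]; field_simp; ring
  have hψd : ψd = φ1 + φd - ψ1 := by linear_combination -hsum
  subst hψd
  refine ⟨?_, ?_, ?_, ?_⟩
  · rw [e0, e1, es0, es1]
    field_simp
    ring
  · rw [e0, e2, es0, es2]
    field_simp
    ring
  · rw [e0, e3, es0, es3]
    field_simp
    ring
  · rw [e0, ead, es0]
    field_simp
    ring
end

section
/- Let F be a field of characteristic ≠ 2, let q ∈ F be nonzero with q^i ≠ 1 for 1 ≤ i ≤ d (where d ≥ 3), and suppose q^{d-1} = −1. Fix θ_0, θ_d, a*_0, θ*_0 ∈ F with θ_0 ≠ θ_d and a*_0 ≠ θ*_0, and for ζ ∈ F define, for 0 ≤ i ≤ d, K_i(ζ) = −((q^i − 1)/(2 q^{i−1}(q² − 1)(a*_0 − θ*_0)))·((q+1)(q^{i−1}+1)ζ − (q−1)(q^{i−1}−1)(a*_0 − θ*_0)(θ_0 − θ_d)), and θ̃_i(ζ) = θ_0 + K_i(ζ). Then θ̃_0(ζ) = θ_0 and θ̃_d(ζ) = θ_d, and for 0 ≤ i, j ≤ d: θ̃_i(ζ)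 − θ̃_j(ζ) = ((q^j − q^i)/(2 q^{i+j−1}))·( (q^{i+j−1}+1)ζ/((q−1)(a*_0 − θ*_0)) − (q^{i+j−1}−1)(θ_0 − θ_d)/(q+1) ). -/
set_option maxHeartbeats 2000000 in
theorem stmt10 (F : Type*) [Field F] (d : ℕ) (hd : 3 ≤ d)
    (hchar : (2 : F) ≠ 0)
    (q θ0 θd as0 θs0 : F) (hq : q ≠ 0)
    (hq1 : ∀ i : ℕ, 1 ≤ i → i ≤ d → q ^ i ≠ 1)
    (hqd : q ^ (d - 1) = -1)
    (hθ : θ0 ≠ θd) (ha : as0 ≠ θs0)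
    (K : ℕ → F → F)
    (hK : ∀ (i : ℕ) (ζ : F), K i ζ =
      -((q ^ i - 1) / (2 * q ^ ((i : ℤ) - 1) * (q ^ 2 - 1) * (as0 - θs0))) *
        ((q + 1) * (q ^ ((i : ℤ) - 1) + 1) * ζ
          - (q - 1) * (q ^ ((i : ℤ) - 1) - 1) * (as0 - θs0) * (θ0 - θd)))
    (θt : ℕ → F → F)
    (hθt : ∀ (i : ℕ) (ζ : F), θt i ζ = θ0 + K i ζ) :
    (∀ ζ : F, θt 0 ζ = θ0 ∧ θt d ζ = θd) ∧
    (∀ i j : ℕ, i ≤ d → j ≤ d → ∀ ζ : F,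
      θt i ζ - θt j ζ =
        ((q ^ j - q ^ i) / (2 * q ^ ((i : ℤ) + (j : ℤ) - 1))) *
          ((q ^ ((i : ℤ) + (j : ℤ) - 1) + 1) * ζ / ((q - 1) * (as0 - θs0))
            - (q ^ ((i : ℤ) + (j : ℤ) - 1) - 1) * (θ0 - θd) / (q + 1))) := by
  have hA : as0 - θs0 ≠ 0 := sub_ne_zero.mpr ha
  have hqm : q - 1 ≠ 0 := sub_ne_zero.mpr (fun h => hq1 1 le_rfl (by omega) (by simpa using h))
  have hqp : q + 1 ≠ 0 := by
    intro h
    have hq2 := hq1 2 (by omega) (by omega)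
    apply hq2
    have hq' : q = -1 := by linear_combination h
    rw [hq']; ring
  have hq2 : q ^ 2 - 1 ≠ 0 := by
    intro h
    exact hq1 2 (by omega) (by omega) (by linear_combination h)
  have hz : ∀ n : ℕ, q ^ ((n : ℤ) - 1) = q ^ n * q⁻¹ := by
    intro n
    rw [sub_eq_add_neg, zpow_add₀ hq, zpow_natCast, zpow_neg_one]
  have hz2 : ∀ i j : ℕ, q ^ ((i : ℤ) + (j : ℤ) - 1) = q ^ i * q ^ j * q⁻¹ := by
    intro i j
    rw [sub_eq_add_neg, zpow_add₀ hq, zpow_add₀ hq, zpow_natCast, zpow_natCast, zpow_neg_one]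
  constructor
  · intro ζ
    constructor
    · rw [hθt, hK]; norm_num
    · have hd1 : d - 1 + 1 = d := by omega
      have hqd' : q ^ d = -q := by
        rw [← hd1, pow_succ, hqd]; ring
      have hqd'' : q ^ d * q⁻¹ = -1 := by
        rw [hqd']; field_simp
      rw [hθt, hK, hz d, hqd'', hqd']
      field_simp
      ring
  · have key : ∀ u v A T : F, u ≠ 0 → v ≠ 0 → A ≠ 0 → ∀ ζ : F,
        -((q * u - 1) / (2 * u * (q ^ 2 - 1) * A)) *
          ((q + 1) * (u + 1) * ζ - (q - 1) * (u - 1) * A * T)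
        - (-((q * v - 1) / (2 * v * (q ^ 2 - 1) * A)) *
          ((q + 1) * (v + 1) * ζ - (q - 1) * (v - 1) * A * T))
        = ((q * v - q * u) / (2 * (q * u * v))) *
          ((q * u * v + 1) * ζ / ((q - 1) * A)
            - (q * u * v - 1) * T / (q + 1)) := by
      intro u v A T hu hv hA' ζ
      have h21 : q ^ 2 - 1 = (q - 1) * (q + 1) := by ring
      rw [h21]
      have hD1 : 2 * u * ((q - 1) * (q + 1)) * A ≠ 0 :=
        mul_ne_zero (mul_ne_zero (mul_ne_zero hchar hu) (mul_ne_zero hqm hqp)) hA'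
      have hD2 : 2 * v * ((q - 1) * (q + 1)) * A ≠ 0 :=
        mul_ne_zero (mul_ne_zero (mul_ne_zero hchar hv) (mul_ne_zero hqm hqp)) hA'
      have hc1 : (q - 1) * A ≠ 0 := mul_ne_zero hqm hA'
      have hquv : 2 * (q * u * v) ≠ 0 :=
        mul_ne_zero hchar (mul_ne_zero (mul_ne_zero hq hu) hv)
      have e1 : -((q * u - 1) / (2 * u * ((q - 1) * (q + 1)) * A)) *
            ((q + 1) * (u + 1) * ζ - (q - 1) * (u - 1) * A * T)
          - (-((q * v - 1) / (2 * v * ((q - 1) * (q + 1)) * A)) *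
            ((q + 1) * (v + 1) * ζ - (q - 1) * (v - 1) * A * T))
          = (-(q * u - 1) * ((q + 1) * (u + 1) * ζ - (q - 1) * (u - 1) * A * T))
              / (2 * u * ((q - 1) * (q + 1)) * A)
            - (-(q * v - 1) * ((q + 1) * (v + 1) * ζ - (q - 1) * (v - 1) * A * T))
              / (2 * v * ((q - 1) * (q + 1)) * A) := by ring
      rw [e1, div_sub_div _ _ hD1 hD2, div_sub_div _ _ hc1 hqp, div_mul_div_comm,
        div_eq_div_iff (mul_ne_zero hD1 hD2) (mul_ne_zero hquv (mul_ne_zero hc1 hqp))]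
      ring
    intro i j _ _ ζ
    rw [hθt, hθt, hK, hK, hz i, hz j, hz2 i j]
    set u := q ^ i * q⁻¹ with hu
    set v := q ^ j * q⁻¹ with hv
    have hu0 : u ≠ 0 := mul_ne_zero (pow_ne_zero _ hq) (inv_ne_zero hq)
    have hv0 : v ≠ 0 := mul_ne_zero (pow_ne_zero _ hq) (inv_ne_zero hq)
    have hxu : q ^ i = q * u := by rw [hu]; field_simp
    have hyv : q ^ j = q * v := by rw [hv]; field_simp
    have huv : q ^ i * q ^ j * q⁻¹ = q * u * v := by
      rw [hu, hv]
      field_simp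
    rw [huv, hxu, hyv]
    linear_combination key u v (as0 - θs0) (θ0 - θd) hu0 hv0 hA ζ
end

section
/- With the notation of the previous statement (K_i(ζ) and θ̃_i(ζ) = θ_0 + K_i(ζ), with q nonzero, q^i ≠ 1 for 1 ≤ i ≤ d, characteristic ≠ 2, a*_0 ≠ θ*_0), for each 2 ≤ i ≤ d−1 and each ζ ∈ F such that θ̃_{i−1}(ζ) ≠ θ̃_i(ζ), the expression (θ̃_{i−2}(ζ) − θ̃_{i+1}(ζ))/(θ̃_{i−1}(ζ) − θ̃_i(ζ)) equals q + q^{-1} + 1. -/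
set_option maxHeartbeats 1000000 in
theorem key11 {F : Type*} [Field F] (q s a c ζ u θ0 : F) (hq : q ≠ 0) (hs : s ≠ 0)
    (ha : a ≠ 0) (hc : c ≠ 0) (h2 : (2 : F) ≠ 0) :
    (θ0 + -((s * q - 1) / (2 * s * c * a)) *
        ((q + 1) * (s + 1) * ζ - (q - 1) * (s - 1) * a * u))
      - (θ0 + -((s * q ^ 4 - 1) / (2 * (s * q ^ 3) * c * a)) *
        ((q + 1) * (s * q ^ 3 + 1) * ζ - (q - 1) * (s * q ^ 3 - 1) * a * u))
    = (q + q⁻¹ + 1) *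
      ((θ0 + -((s * q ^ 2 - 1) / (2 * (s * q) * c * a)) *
          ((q + 1) * (s * q + 1) * ζ - (q - 1) * (s * q - 1) * a * u))
        - (θ0 + -((s * q ^ 3 - 1) / (2 * (s * q ^ 2) * c * a)) *
          ((q + 1) * (s * q ^ 2 + 1) * ζ - (q - 1) * (s * q ^ 2 - 1) * a * u))) := by
  have hD : 2 * (s * q ^ 3) * c * a ≠ 0 :=
    mul_ne_zero (mul_ne_zero (mul_ne_zero h2 (mul_ne_zero hs (pow_ne_zero _ hq))) hc) ha
  have hy1 : 2 * s * c * a ≠ 0 := mul_ne_zero (mul_ne_zero (mul_ne_zero h2 hs) hc) ha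
  have hy2 : 2 * (s * q) * c * a ≠ 0 :=
    mul_ne_zero (mul_ne_zero (mul_ne_zero h2 (mul_ne_zero hs hq)) hc) ha
  have hy3 : 2 * (s * q ^ 2) * c * a ≠ 0 :=
    mul_ne_zero (mul_ne_zero (mul_ne_zero h2 (mul_ne_zero hs (pow_ne_zero _ hq))) hc) ha
  have e1 : -((s * q - 1) / (2 * s * c * a)) *
      ((q + 1) * (s + 1) * ζ - (q - 1) * (s - 1) * a * u)
      = -(q ^ 3 * (s * q - 1) * ((q + 1) * (s + 1) * ζ - (q - 1) * (s - 1) * a * u))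
        / (2 * (s * q ^ 3) * c * a) := by
    rw [neg_mul, div_mul_eq_mul_div, ← neg_div, div_eq_div_iff hy1 hD]; ring
  have e2 : -((s * q ^ 2 - 1) / (2 * (s * q) * c * a)) *
      ((q + 1) * (s * q + 1) * ζ - (q - 1) * (s * q - 1) * a * u)
      = -(q ^ 2 * (s * q ^ 2 - 1) * ((q + 1) * (s * q + 1) * ζ - (q - 1) * (s * q - 1) * a * u))
        / (2 * (s * q ^ 3) * c * a) := by
    rw [neg_mul, div_mul_eq_mul_div, ← neg_div, div_eq_div_iff hy2 hD]; ring
  have e3 : -((s * q ^ 3 - 1) / (2 * (s * q ^ 2) * c * a)) *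
      ((q + 1) * (s * q ^ 2 + 1) * ζ - (q - 1) * (s * q ^ 2 - 1) * a * u)
      = -(q * (s * q ^ 3 - 1) * ((q + 1) * (s * q ^ 2 + 1) * ζ - (q - 1) * (s * q ^ 2 - 1) * a * u))
        / (2 * (s * q ^ 3) * c * a) := by
    rw [neg_mul, div_mul_eq_mul_div, ← neg_div, div_eq_div_iff hy3 hD]; ring
  have e4 : -((s * q ^ 4 - 1) / (2 * (s * q ^ 3) * c * a)) *
      ((q + 1) * (s * q ^ 3 + 1) * ζ - (q - 1) * (s * q ^ 3 - 1) * a * u)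
      = -((s * q ^ 4 - 1) * ((q + 1) * (s * q ^ 3 + 1) * ζ - (q - 1) * (s * q ^ 3 - 1) * a * u))
        / (2 * (s * q ^ 3) * c * a) := by
    rw [neg_mul, div_mul_eq_mul_div, ← neg_div]
  rw [e1, e2, e3, e4]
  have hsub : ∀ x y : F, (θ0 + x) - (θ0 + y) = x - y := fun x y => by ring
  rw [hsub, hsub, div_sub_div_same, div_sub_div_same]
  have hr : q + q⁻¹ + 1 = (q ^ 2 + q + 1) / q := by
    field_simp; ring
  rw [hr, div_mul_div_comm, div_eq_div_iff hD (mul_ne_zero hq hD)]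
  ring


set_option maxHeartbeats 1000000 in
theorem stmt11 (F : Type*) [Field F] (d : ℕ) (hd : 3 ≤ d)
    (hchar : (2 : F) ≠ 0)
    (q θ0 θd as0 θs0 : F) (hq : q ≠ 0)
    (hq1 : ∀ i : ℕ, 1 ≤ i → i ≤ d → q ^ i ≠ 1)
    (ha : as0 ≠ θs0)
    (K : ℕ → F → F)
    (hK : ∀ (i : ℕ) (ζ : F), K i ζ =
      -((q ^ i - 1) / (2 * q ^ ((i : ℤ) - 1) * (q ^ 2 - 1) * (as0 - θs0))) *
        ((q + 1) * (q ^ ((i : ℤ) - 1) + 1) * ζ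
          - (q - 1) * (q ^ ((i : ℤ) - 1) - 1) * (as0 - θs0) * (θ0 - θd)))
    (θt : ℕ → F → F)
    (hθt : ∀ (i : ℕ) (ζ : F), θt i ζ = θ0 + K i ζ) :
    ∀ i : ℕ, 2 ≤ i → i ≤ d - 1 → ∀ ζ : F,
      θt (i - 1) ζ ≠ θt i ζ →
      (θt (i - 2) ζ - θt (i + 1) ζ) / (θt (i - 1) ζ - θt i ζ) = q + q⁻¹ + 1 := by
  intro i hi2 hid ζ hne
  obtain ⟨k, rfl⟩ : ∃ k, i = k + 2 := ⟨i - 2, by omega⟩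
  have hq2 : q ^ 2 - 1 ≠ 0 := sub_ne_zero.mpr (hq1 2 (by norm_num) (by omega))
  have haθ : as0 - θs0 ≠ 0 := sub_ne_zero.mpr ha
  have hsz : q ^ ((k : ℤ) - 1) ≠ 0 := zpow_ne_zero _ hq
  simp only [show k + 2 - 1 = k + 1 by omega, show k + 2 - 2 = k by omega] at hne ⊢
  rw [div_eq_iff (sub_ne_zero.mpr hne)]
  simp only [hθt, hK]
  have hmul : ∀ (j : ℕ) (m : ℤ), q ^ m * q ^ j = q ^ (m + (j : ℤ)) := fun j m => by
    rw [← zpow_natCast q j, ← zpow_add₀ hq]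
  have n0 : q ^ k = q ^ ((k : ℤ) - 1) * q := by
    rw [← zpow_add_one₀ hq, show (k : ℤ) - 1 + 1 = ((k : ℕ) : ℤ) by ring, zpow_natCast]
  have n1 : q ^ (k + 1) = q ^ ((k : ℤ) - 1) * q ^ 2 := by
    rw [hmul, show (k : ℤ) - 1 + ((2 : ℕ) : ℤ) = ((k + 1 : ℕ) : ℤ) by push_cast; ring,
      zpow_natCast]
  have n2 : q ^ (k + 2) = q ^ ((k : ℤ) - 1) * q ^ 3 := by
    rw [hmul, show (k : ℤ) - 1 + ((3 : ℕ) : ℤ) = ((k + 2 : ℕ) : ℤ) by push_cast; ring,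
      zpow_natCast]
  have n3 : q ^ (k + 2 + 1) = q ^ ((k : ℤ) - 1) * q ^ 4 := by
    rw [hmul, show (k : ℤ) - 1 + ((4 : ℕ) : ℤ) = ((k + 2 + 1 : ℕ) : ℤ) by push_cast; ring,
      zpow_natCast]
  have p1 : q ^ (((k + 1 : ℕ) : ℤ) - 1) = q ^ ((k : ℤ) - 1) * q := by
    rw [← zpow_add_one₀ hq, show (k : ℤ) - 1 + 1 = ((k + 1 : ℕ) : ℤ) - 1 by push_cast; ring]
  have p2 : q ^ (((k + 2 : ℕ) : ℤ) - 1) = q ^ ((k : ℤ) - 1) * q ^ 2 := by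
    rw [hmul, show (k : ℤ) - 1 + ((2 : ℕ) : ℤ) = ((k + 2 : ℕ) : ℤ) - 1 by push_cast; ring]
  have p3 : q ^ (((k + 2 + 1 : ℕ) : ℤ) - 1) = q ^ ((k : ℤ) - 1) * q ^ 3 := by
    rw [hmul, show (k : ℤ) - 1 + ((3 : ℕ) : ℤ) = ((k + 2 + 1 : ℕ) : ℤ) - 1 by push_cast; ring]
  rw [p1, p2, p3, n0, n1, n2, n3]
  linear_combination key11 q (q ^ ((k : ℤ) - 1)) (as0 - θs0) (q ^ 2 - 1) ζ (θ0 - θd) θ0 hq hsz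
    haθ hq2 hchar
end

section
/- Let F be a field of characteristic ≠ 2, d ≥ 3, q ∈ F nonzero with q^i ≠ 1 for 1 ≤ i ≤ d and q^{d−1} = −1. With θ̃_i(ζ) defined as in the type-I deformation (θ̃_i(ζ) = θ_0 + K_i(ζ)), for 1 ≤ i ≤ d the sum ϑ_i := Σ_{ℓ=0}^{i−1} (θ̃_ℓ(ζ) − θ̃_{d−ℓ}(ζ))/(θ̃_0(ζ) − θ̃_d(ζ)) equals (q^i − 1)(q^{i−2} + 1)/(q^{i−2}(q² − 1)), independently of ζ. -/
/-!
Write `K_i(ζ)` as a rational function `k(x)` of `x = q^(i-1)`. Since `q^(d-1) = -1`, the index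
reflection `i ↦ d - i` becomes `x ↦ -(q x)⁻¹`, and
`k(x) - k(-(q x)⁻¹) = (θ₀ - θ_d)(q x + x⁻¹)/(q + 1)` because the `ζ`-terms cancel.
For `ℓ = 0` this gives `θ̃₀ - θ̃_d = θ₀ - θ_d`, so each summand is `(q^ℓ + q^(1-ℓ))/(q + 1)`,
and the claim is a sum of two geometric series.
-/

open Finset

section

variable {F : Type*} [Field F]

/-- `K_i(ζ)` with `x = q^(i-1)`, `a = a*₀ - θ*₀` and `t = θ₀ - θ_d`. -/
def deformK (q a t ζ x : F) : F :=
  -((q * x - 1) / (2 * x * (q ^ 2 - 1) * a)) *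
    ((q + 1) * (x + 1) * ζ - (q - 1) * (x - 1) * a * t)

theorem deformK_sub_deformK_neg_inv {q a t ζ x : F} (h2 : (2 : F) ≠ 0) (hq : q ≠ 0)
    (hq2 : q ^ 2 - 1 ≠ 0) (ha : a ≠ 0) (hx : x ≠ 0) :
    deformK q a t ζ x - deformK q a t ζ (-(q * x)⁻¹) = t * (q * x + x⁻¹) / (q + 1) := by
  have hq1 : q + 1 ≠ 0 := fun h => hq2 (by linear_combination (q - 1) * h)
  unfold deformK
  field_simp
  ring

theorem sum_range_zpow_add_zpow_one_sub {q : F} (hq : q ≠ 0) (hq1 : q ≠ 1) (i : ℕ) :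
    ∑ ℓ ∈ range i, (q ^ (ℓ : ℤ) + q ^ (1 - (ℓ : ℤ))) =
      (q ^ i - 1) * (q ^ ((i : ℤ) - 2) + 1) / (q ^ ((i : ℤ) - 2) * (q - 1)) := by
  have hq1' : q - 1 ≠ 0 := sub_ne_zero.mpr hq1
  induction i with
  | zero => simp
  | succ n ih =>
    rw [sum_range_succ, ih]
    simp only [zpow_sub₀ hq, zpow_natCast, zpow_ofNat, Nat.cast_succ, zpow_add_one₀ hq]
    field_simp
    ring

theorem zpow_cast_sub_sub_one_eq_neg_inv {q : F} (hq : q ≠ 0) {d : ℕ} (hd : 1 ≤ d)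
    (hqd : q ^ (d - 1) = -1) {ℓ : ℕ} (hℓ : ℓ ≤ d) :
    q ^ (((d - ℓ : ℕ) : ℤ) - 1) = -(q * q ^ ((ℓ : ℤ) - 1))⁻¹ := by
  have hqd' : q ^ ((d : ℤ) - 1) = -1 := by
    rw [← hqd, ← zpow_natCast, Nat.cast_sub hd, Nat.cast_one]
  rw [← zpow_one_add₀ hq, add_sub_cancel, Nat.cast_sub hℓ, sub_sub, add_comm, ← sub_sub,
    zpow_sub₀ hq, hqd', neg_div, one_div, zpow_natCast]

end

theorem stmt12 (F : Type*) [Field F] (d : ℕ) (hd : 3 ≤ d)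
    (hchar : (2 : F) ≠ 0)
    (q θ0 θd as0 θs0 : F) (hq : q ≠ 0)
    (hq1 : ∀ i : ℕ, 1 ≤ i → i ≤ d → q ^ i ≠ 1)
    (hqd : q ^ (d - 1) = -1)
    (hθ : θ0 ≠ θd) (ha : as0 ≠ θs0)
    (K : ℕ → F → F)
    (hK : ∀ (i : ℕ) (ζ : F), K i ζ =
      -((q ^ i - 1) / (2 * q ^ ((i : ℤ) - 1) * (q ^ 2 - 1) * (as0 - θs0))) *
        ((q + 1) * (q ^ ((i : ℤ) - 1) + 1) * ζ
          - (q - 1) * (q ^ ((i : ℤ) - 1) - 1) * (as0 - θs0) * (θ0 - θd)))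
    (θt : ℕ → F → F)
    (hθt : ∀ (i : ℕ) (ζ : F), θt i ζ = θ0 + K i ζ) :
    ∀ i : ℕ, 1 ≤ i → i ≤ d → ∀ ζ : F,
      (∑ ℓ ∈ Finset.range i, (θt ℓ ζ - θt (d - ℓ) ζ) / (θt 0 ζ - θt d ζ))
        = (q ^ i - 1) * (q ^ ((i : ℤ) - 2) + 1) / (q ^ ((i : ℤ) - 2) * (q ^ 2 - 1)) := by
  intro i hi hid ζ
  have hq2 : q ^ 2 - 1 ≠ 0 := sub_ne_zero.mpr (hq1 2 one_le_two (by omega))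
  have hqp : q + 1 ≠ 0 := fun h => hq2 (by linear_combination (q - 1) * h)
  have hθt_eq (j : ℕ) :
      θt j ζ = θ0 + deformK q (as0 - θs0) (θ0 - θd) ζ (q ^ ((j : ℤ) - 1)) := by
    rw [hθt, hK, deformK, ← zpow_one_add₀ hq, add_sub_cancel, zpow_natCast]
  have hdiff {ℓ : ℕ} (hℓ : ℓ ≤ d) : θt ℓ ζ - θt (d - ℓ) ζ =
      (θ0 - θd) * (q ^ (ℓ : ℤ) + q ^ (1 - (ℓ : ℤ))) / (q + 1) := by
    rw [hθt_eq, hθt_eq, zpow_cast_sub_sub_one_eq_neg_inv hq (by omega) hqd hℓ,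
      add_sub_add_left_eq_sub,
      deformK_sub_deformK_neg_inv hchar hq hq2 (sub_ne_zero.mpr ha) (zpow_ne_zero _ hq),
      ← zpow_one_add₀ hq, add_sub_cancel, ← zpow_neg, neg_sub]
  have hden : θt 0 ζ - θt d ζ = θ0 - θd := by
    rw [← Nat.sub_zero d, hdiff (Nat.zero_le d), Nat.cast_zero, zpow_zero, sub_zero, zpow_one,
      add_comm, mul_div_assoc, div_self hqp, mul_one]
  have hterm : ∀ ℓ ∈ Finset.range i, (θt ℓ ζ - θt (d - ℓ) ζ) / (θt 0 ζ - θt d ζ) =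
      (q ^ (ℓ : ℤ) + q ^ (1 - (ℓ : ℤ))) / (q + 1) := fun ℓ hℓ => by
    rw [hdiff (by have := Finset.mem_range.mp hℓ; omega), hden, mul_div_assoc,
      mul_div_cancel_left₀ _ (sub_ne_zero.mpr hθ)]
  have hq1' : q ≠ 1 := by simpa using hq1 1 le_rfl (by omega)
  rw [Finset.sum_congr rfl hterm, ← Finset.sum_div, sum_range_zpow_add_zpow_one_sub hq hq1',
    div_div]
  ring
end

section
/- Let F be a field of characteristic 2, with θ_0, θ_3, θ*_0, θ*_3, a_0, a_3, a*_0 ∈ F satisfying θ_0 ≠ θ_3, θ*_0 ≠ θ*_3, a_0 ∉ {θ_0, θ_3}, a_3 ∉ {θ_0, θ_3}, a*_0 ≠ θ*_0, and the compatibility relation (a_3 − θ_0)/(a_0 − θ_0) = (a*_0 − θ*_3)/(a*_0 − θ*_0). For ζ ∈ F define the sequence p̃(ζ) as in Section 9 of the paper: θ̃_i(ζ), θ̃*_i(ζ) as in the type-IV construction, and φ̃_1(ζ) = ζ, φ̃_2(ζ) = (θ*_0 − θ*_3 + ζ/(a_0 − θ_0))(θ_0 − θ_3 + ζ/(a*_0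 − θ*_0)), φ̃_3(ζ) = ((a_3 − θ_3)/(a_0 − θ_0))ζ, ϕ̃_1(ζ) = ((a_0 − θ_3)/(a_0 − θ_0))ζ, ϕ̃_2(ζ) = φ̃_2(ζ), ϕ̃_3(ζ) = ((a_3 − θ_0)/(a_0 − θ_0))ζ. Then for 1 ≤ i ≤ 3, φ̃_i(ζ) = ϕ̃_1(ζ)·ϑ_i + (θ̃*_i(ζ) − θ̃*_0(ζ))(θ̃_{i−1}(ζ) − θ̃_3(ζ)) and ϕ̃_i(ζ) = φ̃_1(ζ)·ϑ_i + (θ̃*_i(ζ) − θ̃*_0(ζ))(θ̃_{4−i}(ζ) − θ̃_0(ζ)), where (ϑ_1, ϑ_2, ϑ_3) = (1, 0, 1). -/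
/-! In characteristic 2 every difference equals its negative, so the identities for `i = 1, 2`
hold up to such sign changes, while for `i = 3` they reduce, after clearing denominators, to the
compatibility relation in the form `(a₃ - a₀)(a*₀ - θ*₀) = (θ*₃ - θ*₀)(a₀ - θ₀)`. -/

theorem sub_comm_of_two_eq_zero {R : Type*} [CommRing R] (h : (2 : R) = 0) (a b : R) :
    a - b = b - a := by
  linear_combination (a - b) * h

theorem sub_mul_sub_eq_of_div_eq_div_of_two_eq_zero {F : Type*} [Field F] (h : (2 : F) = 0)
    {θ0 θs0 θs3 a0 a3 as0 : F} (ha0 : a0 ≠ θ0) (has0 : as0 ≠ θs0)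
    (hcompat : (a3 - θ0) / (a0 - θ0) = (as0 - θs3) / (as0 - θs0)) :
    (a3 - a0) * (as0 - θs0) = (θs3 - θs0) * (a0 - θ0) := by
  rw [div_eq_div_iff (sub_ne_zero.mpr ha0) (sub_ne_zero.mpr has0)] at hcompat
  linear_combination hcompat + (θs0 - θs3) * (a0 - θ0) * h

theorem stmt15_general (F : Type*) [Field F] (hchar : (2 : F) = 0)
    (θ0 θ3 θs0 θs3 a0 a3 as0 : F)
    (h3 : a0 ≠ θ0)
    (h7 : as0 ≠ θs0)
    (hcompat : (a3 - θ0) / (a0 - θ0) = (as0 - θs3) / (as0 - θs0))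
    (ζ : F)
    (θt θts φt ψt vt : ℕ → F)
    (ht0 : θt 0 = θ0) (ht1 : θt 1 = θ0 + ζ / (as0 - θs0))
    (ht2 : θt 2 = θ3 + ζ / (as0 - θs0)) (ht3 : θt 3 = θ3)
    (hs0 : θts 0 = θs0) (hs1 : θts 1 = θs0 + ζ / (a0 - θ0))
    (hs2 : θts 2 = θs3 + ζ / (a0 - θ0)) (hs3 : θts 3 = θs3)
    (hφ1 : φt 1 = ζ)
    (hφ2 : φt 2 = (θs0 - θs3 + ζ / (a0 - θ0)) * (θ0 - θ3 + ζ / (as0 - θs0)))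
    (hφ3 : φt 3 = ((a3 - θ3) / (a0 - θ0)) * ζ)
    (hψ1 : ψt 1 = ((a0 - θ3) / (a0 - θ0)) * ζ)
    (hψ2 : ψt 2 = (θs0 - θs3 + ζ / (a0 - θ0)) * (θ0 - θ3 + ζ / (as0 - θs0)))
    (hψ3 : ψt 3 = ((a3 - θ0) / (a0 - θ0)) * ζ)
    (hv1 : vt 1 = 1) (hv2 : vt 2 = 0) (hv3 : vt 3 = 1) :
    ∀ i : ℕ, 1 ≤ i → i ≤ 3 →
      φt i = ψt 1 * vt i + (θts i - θts 0) * (θt (i - 1) - θt 3) ∧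
      ψt i = φt 1 * vt i + (θts i - θts 0) * (θt (4 - i) - θt 0) := by
  have hA : a0 - θ0 ≠ 0 := sub_ne_zero.mpr h3
  have hB : as0 - θs0 ≠ 0 := sub_ne_zero.mpr h7
  have hcross := sub_mul_sub_eq_of_div_eq_div_of_two_eq_zero hchar h3 h7 hcompat
  have hflip := sub_comm_of_two_eq_zero hchar
  intro i hi1 hi3
  interval_cases i <;> simp only [hφ1, hφ2, hφ3, hψ1, hψ2, hψ3, hv1, hv2, hv3,
    ht0, ht1, ht2, ht3, hs0, hs1, hs2, hs3, Nat.reduceSub]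
  · constructor <;> field_simp
    · linear_combination (ζ * (θ3 - θ0)) * hchar
    · linear_combination (ζ * (θ0 - θ3)) * hchar
  · constructor
    · rw [hflip θs0 θs3]; ring
    · rw [hflip θs0 θs3, hflip θ0 θ3]; ring
  · constructor <;> field_simp <;> linear_combination ζ * hcross

theorem stmt15 (F : Type*) [Field F] (hchar : (2 : F) = 0)
    (θ0 θ3 θs0 θs3 a0 a3 as0 : F)
    (h1 : θ0 ≠ θ3) (h2 : θs0 ≠ θs3)
    (h3 : a0 ≠ θ0) (h4 : a0 ≠ θ3) (h5 : a3 ≠ θ0) (h6 : a3 ≠ θ3)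
    (h7 : as0 ≠ θs0)
    (hcompat : (a3 - θ0) / (a0 - θ0) = (as0 - θs3) / (as0 - θs0))
    (ζ : F)
    (θt θts φt ψt vt : ℕ → F)
    (ht0 : θt 0 = θ0) (ht1 : θt 1 = θ0 + ζ / (as0 - θs0))
    (ht2 : θt 2 = θ3 + ζ / (as0 - θs0)) (ht3 : θt 3 = θ3)
    (hs0 : θts 0 = θs0) (hs1 : θts 1 = θs0 + ζ / (a0 - θ0))
    (hs2 : θts 2 = θs3 + ζ / (a0 - θ0)) (hs3 : θts 3 = θs3)
    (hφ1 : φt 1 = ζ)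
    (hφ2 : φt 2 = (θs0 - θs3 + ζ / (a0 - θ0)) * (θ0 - θ3 + ζ / (as0 - θs0)))
    (hφ3 : φt 3 = ((a3 - θ3) / (a0 - θ0)) * ζ)
    (hψ1 : ψt 1 = ((a0 - θ3) / (a0 - θ0)) * ζ)
    (hψ2 : ψt 2 = (θs0 - θs3 + ζ / (a0 - θ0)) * (θ0 - θ3 + ζ / (as0 - θs0)))
    (hψ3 : ψt 3 = ((a3 - θ0) / (a0 - θ0)) * ζ)
    (hv1 : vt 1 = 1) (hv2 : vt 2 = 0) (hv3 : vt 3 = 1) :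
    ∀ i : ℕ, 1 ≤ i → i ≤ 3 →
      φt i = ψt 1 * vt i + (θts i - θts 0) * (θt (i - 1) - θt 3) ∧
      ψt i = φt 1 * vt i + (θts i - θts 0) * (θt (4 - i) - θt 0) :=
  stmt15_general F hchar θ0 θ3 θs0 θs3 a0 a3 as0 h3 h7 hcompat ζ θt θts φt ψt vt ht0 ht1 ht2 ht3 hs0
    hs1 hs2 hs3 hφ1 hφ2 hφ3 hψ1 hψ2 hψ3 hv1 hv2 hv3
end
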